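/- Let α ∈ [0,2) and f ∈ H. If there is B > 0 such that ‖P_{t,s}f − f*‖² ≤ B (t−s)^{−α} for all t > s, then σ_{f−f*}((−δ, δ]) ≤ A δ^α for all δ > 0, where A = ρ(α) B / 2^α and ρ(α) = inf_{x>0} x^{2−α}/sin²x. -/

import Mathlib

/-!
Take `τ = 2 x₀ / δ` with `x₀ ∈ (0, π)`. Since `sin y / y` decreases on `(0, π]` (concavity of
`sin`), the kernel `Fker τ` is at least `(sin x₀ / x₀)²` on `(-δ, δ] \ {0}`, so the rate bound at
`τ` gives `μ (-δ, δ] ≤ B δ^α / 2^α · x₀^(2-α) / sin² x₀`. Beyond `π` the quotient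
`x^(2-α) / sin² x` is at least `(π/2)^(2-α)`, so the infimum over `(0, π)` is already `ρ(α)`.
-/

open MeasureTheory Real Set intervalIntegral

/-- The Fejér-type kernel. -/
noncomputable def Fker (τ x : ℝ) : ℝ := (Real.sin (τ * x / 2) / (τ * x / 2)) ^ 2

/-- `ρ(α) = inf_{x>0} x^{2-α}/sin²x` (the points where `sin x = 0`, at which the
quotient is mathematically `+∞`, are excluded). -/
noncomputable def rho (α : ℝ) : ℝ :=
  sInf {r : ℝ | ∃ x > 0, Real.sin x ≠ 0 ∧ r = x ^ (2 - α) / Real.sin x ^ 2}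

lemma sin_div_le_sin_div {x y : ℝ} (hy : 0 < y) (hyx : y ≤ x) (hx : x ≤ π) :
    sin x / x ≤ sin y / y := by
  have h := strictConcaveOn_sin_Icc.concaveOn.antitoneOn_slope_gt (x := 0) ⟨le_rfl, pi_pos.le⟩
    ⟨⟨hy.le, hyx.trans hx⟩, hy⟩ ⟨⟨hy.le.trans hyx, hx⟩, hy.trans_le hyx⟩ hyx
  simpa [slope_def_field] using h

lemma sq_sin_div_le_sq_sin_div {x y : ℝ} (hy : y ≠ 0) (hyx : |y| ≤ x) (hx : x ≤ π) :
    (sin x / x) ^ 2 ≤ (sin y / y) ^ 2 := by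
  have hx₀ : 0 < x := (abs_pos.2 hy).trans_le hyx
  have h_abs : sin y / y = sin |y| / |y| := by
    rcases abs_choice y with h | h <;> rw [h]
    rw [sin_neg, neg_div_neg_eq]
  rw [h_abs]
  exact pow_le_pow_left₀ (div_nonneg (sin_nonneg_of_nonneg_of_le_pi hx₀.le hx) hx₀.le)
    (sin_div_le_sin_div (abs_pos.2 hy) hyx hx) 2

lemma Fker_nonneg (τ x : ℝ) : 0 ≤ Fker τ x := sq_nonneg _

lemma Fker_le_one (τ x : ℝ) : Fker τ x ≤ 1 := by
  rw [Fker, div_pow]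
  exact div_le_one_of_le₀ sin_sq_le_sq (sq_nonneg _)

lemma measurable_Fker (τ : ℝ) : Measurable (Fker τ) := by
  unfold Fker
  fun_prop

lemma integrable_Fker {μ : Measure ℝ} [IsFiniteMeasure μ] (τ : ℝ) : Integrable (Fker τ) μ :=
  (integrable_const (1 : ℝ)).mono' (measurable_Fker τ).aestronglyMeasurable
    (ae_of_all _ fun x => by
      rw [norm_of_nonneg (Fker_nonneg τ x)]
      exact Fker_le_one τ x)

section FiniteMeasure

variable {μ : Measure ℝ} [IsFiniteMeasure μ]

lemma sq_sin_div_mul_measure_Ioc_le_integral_Fker (hμ0 : μ {0} = 0) {δ x₀ : ℝ} (hδ : 0 < δ)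
    (hx₀ : 0 < x₀) (hx₀π : x₀ ≤ π) :
    (sin x₀ / x₀) ^ 2 * (μ (Ioc (-δ) δ)).toReal ≤ ∫ x, Fker (2 * x₀ / δ) x ∂μ := by
  -- `Fker τ 0 = 0` (junk value of `0 / 0`), so the point `0` has to be removed.
  have h_lower : ∀ x ∈ Ioc (-δ) δ \ {0}, (sin x₀ / x₀) ^ 2 ≤ Fker (2 * x₀ / δ) x := by
    rintro x ⟨⟨hxl, hxu⟩, hx0 : x ≠ 0⟩
    refine sq_sin_div_le_sq_sin_div (by positivity) ?_ hx₀π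
    have hxδ : |x| ≤ δ := abs_le.2 ⟨hxl.le, hxu⟩
    calc |2 * x₀ / δ * x / 2| = x₀ / δ * |x| := by
          rw [abs_div, abs_mul, abs_of_pos (by positivity : 0 < 2 * x₀ / δ), abs_two]
          ring
      _ ≤ x₀ / δ * δ := by gcongr
      _ = x₀ := div_mul_cancel₀ x₀ hδ.ne'
  calc (sin x₀ / x₀) ^ 2 * (μ (Ioc (-δ) δ)).toReal
      = (sin x₀ / x₀) ^ 2 * (μ (Ioc (-δ) δ \ {0})).toReal := by rw [measure_sdiff_null hμ0]
    _ ≤ ∫ x in Ioc (-δ) δ \ {0}, Fker (2 * x₀ / δ) x ∂μ :=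
        setIntegral_ge_of_const_le_real (measurableSet_Ioc.diff (measurableSet_singleton 0))
          (measure_ne_top _ _) h_lower (integrable_Fker _).integrableOn
    _ ≤ ∫ x, Fker (2 * x₀ / δ) x ∂μ :=
        setIntegral_le_integral (integrable_Fker _) (ae_of_all _ (Fker_nonneg _))

lemma measure_Ioc_le_of_integral_Fker_le (hμ0 : μ {0} = 0) {α B δ : ℝ} (hδ : 0 < δ)
    (hint : ∀ τ > 0, ∫ x, Fker τ x ∂μ ≤ B * τ ^ (-α)) {x₀ : ℝ} (hx₀ : 0 < x₀) (hx₀π : x₀ < π) :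
    (μ (Ioc (-δ) δ)).toReal ≤ B * δ ^ α / 2 ^ α * (x₀ ^ (2 - α) / sin x₀ ^ 2) := by
  have hsin : 0 < sin x₀ := sin_pos_of_pos_of_lt_pi hx₀ hx₀π
  have h_bound : (sin x₀ / x₀) ^ 2 * (μ (Ioc (-δ) δ)).toReal ≤ B * (2 * x₀ / δ) ^ (-α) :=
    (sq_sin_div_mul_measure_Ioc_le_integral_Fker hμ0 hδ hx₀ hx₀π.le).trans
      (hint _ (by positivity))
  have h_eq : B * (2 * x₀ / δ) ^ (-α) / (sin x₀ / x₀) ^ 2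
      = B * δ ^ α / 2 ^ α * (x₀ ^ (2 - α) / sin x₀ ^ 2) := by
    rw [rpow_neg (by positivity), div_rpow (by positivity) hδ.le, mul_rpow zero_le_two hx₀.le,
      rpow_sub hx₀, rpow_two]
    have : x₀ ^ α ≠ 0 := by positivity
    field_simp
  rw [← h_eq, le_div_iff₀' (by positivity)]
  exact h_bound

end FiniteMeasure

lemma le_rho_of_forall_mem_Ioo {α c : ℝ} (hα : α ≤ 2)
    (hc : ∀ x ∈ Ioo 0 π, c ≤ x ^ (2 - α) / sin x ^ 2) : c ≤ rho α := by
  have hπ2 : π / 2 ∈ Ioo 0 π := ⟨by positivity, by linarith [pi_pos]⟩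
  refine le_csInf ⟨_, π / 2, hπ2.1, by simp, rfl⟩ ?_
  rintro _ ⟨x, hx, hsin, rfl⟩
  rcases lt_or_ge x π with hxπ | hπx
  · exact hc x ⟨hx, hxπ⟩
  · calc c ≤ (π / 2) ^ (2 - α) / sin (π / 2) ^ 2 := hc _ hπ2
      _ = (π / 2) ^ (2 - α) / 1 := by rw [sin_pi_div_two, one_pow]
      _ ≤ x ^ (2 - α) / sin x ^ 2 :=
          div_le_div₀ (by positivity) (rpow_le_rpow hπ2.1.le (by linarith) (by linarith))
            (by positivity) (sin_sq_le_one x)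

theorem stmt3_general
    {H : Type*} [NormedAddCommGroup H] [InnerProductSpace ℂ H]
    (U : ℝ → H →L[ℂ] H)
    (f fstar : H)
    (μ : Measure ℝ) [IsFiniteMeasure μ] (hμ0 : μ {0} = 0)
    (hrep : ∀ s t : ℝ, s < t →
      ‖(t - s)⁻¹ • (∫ τ in s..t, U τ f) - fstar‖ ^ 2 = ∫ x, Fker (t - s) x ∂μ)
    (α : ℝ) (hα : α ∈ Set.Ico (0 : ℝ) 2)
    (B : ℝ) (hB : 0 < B)
    (hrate : ∀ s t : ℝ, s < t →
      ‖(t - s)⁻¹ • (∫ τ in s..t, U τ f) - fstar‖ ^ 2 ≤ B * (t - s) ^ (-α))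
    (δ : ℝ) (hδ : 0 < δ) :
    (μ (Set.Ioc (-δ) δ)).toReal ≤ rho α * B / 2 ^ α * δ ^ α := by
  have hint : ∀ τ > 0, ∫ x, Fker τ x ∂μ ≤ B * τ ^ (-α) := fun τ hτ => by
    have h := hrate 0 τ hτ
    rwa [hrep 0 τ hτ, sub_zero] at h
  have hC : 0 < B * δ ^ α / 2 ^ α := by positivity
  have hρ : (μ (Ioc (-δ) δ)).toReal / (B * δ ^ α / 2 ^ α) ≤ rho α :=
    le_rho_of_forall_mem_Ioo hα.2.le fun x hx =>
      (div_le_iff₀' hC).2 (measure_Ioc_le_of_integral_Fker_le hμ0 hδ hint hx.1 hx.2)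
  calc (μ (Ioc (-δ) δ)).toReal ≤ rho α * (B * δ ^ α / 2 ^ α) := (div_le_iff₀ hC).1 hρ
    _ = rho α * B / 2 ^ α * δ ^ α := by ring

theorem stmt3
    {H : Type*} [NormedAddCommGroup H] [InnerProductSpace ℂ H] [CompleteSpace H]
    (U : ℝ → H →L[ℂ] H)
    (hUgrp : ∀ a b : ℝ, U (a + b) = (U a).comp (U b))
    (hUiso : ∀ (τ : ℝ) (g : H), ‖U τ g‖ = ‖g‖)
    (f fstar : H)
    (hcont : Continuous fun τ : ℝ => U τ f)
    (hfix : ∀ τ : ℝ, U τ fstar = fstar)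
    (horth : ∀ g : H, (∀ τ : ℝ, U τ g = g) → (inner ℂ (f - fstar) g : ℂ) = 0)
    (μ : Measure ℝ) [IsFiniteMeasure μ] (hμ0 : μ {0} = 0)
    (hrep : ∀ s t : ℝ, s < t →
      ‖(t - s)⁻¹ • (∫ τ in s..t, U τ f) - fstar‖ ^ 2 = ∫ x, Fker (t - s) x ∂μ)
    (α : ℝ) (hα : α ∈ Set.Ico (0 : ℝ) 2)
    (B : ℝ) (hB : 0 < B)
    (hrate : ∀ s t : ℝ, s < t →
      ‖(t - s)⁻¹ • (∫ τ in s..t, U τ f) - fstar‖ ^ 2 ≤ B * (t - s) ^ (-α))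
    (δ : ℝ) (hδ : 0 < δ) :
    (μ (Set.Ioc (-δ) δ)).toReal ≤ rho α * B / 2 ^ α * δ ^ α :=
  stmt3_general U f fstar μ hμ0 hrep α hα B hB hrate δ hδ
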